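/- arXiv:2205.13167 — 8 statements merged into one kernel-verified Lean document; each statement's English description precedes it below -/
import Mathlib

section
/- Let A be an abelian normal subgroup of a finite group G such that G = ⟨x⟩A for some x ∈ G. Then the map A → G' given by a ↦ [x,a] is a group homomorphism onto the commutator subgroup G' with kernel C_A(x); in particular |G'| = |A : C_A(x)|. -/
/-!
Since `A` is abelian and normal, `a ↦ ⁅x, a⁆` is a homomorphism `A → A`; its kernel is `C_A(x)`.
Every `g ∈ G` is `x ^ n * a` with `a ∈ A`, and conjugation by `x ^ n` maps `⁅x, a⁆` to
`⁅x, x ^ n * a * x ^ (-n)⁆` while conjugation by `a` is trivial on `A`, so the image `R` is normal.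
Modulo `R` the image of `x` commutes with the image of `A`, hence `G / R` is abelian and `G' = R`.
-/

open scoped commutatorElement

namespace Subgroup

variable {G : Type*} [Group G]

theorem exists_eq_zpow_mul_of_zpowers_sup_eq_top {A : Subgroup G} [A.Normal] {x : G}
    (hgen : zpowers x ⊔ A = ⊤) (g : G) : ∃ n : ℤ, ∃ a ∈ A, g = x ^ n * a := by
  have hg : g ∈ ((zpowers x ⊔ A : Subgroup G) : Set G) := by simp [hgen]
  rw [mul_normal] at hg
  obtain ⟨_, ⟨n, rfl⟩, a, ha, rfl⟩ := hg
  exact ⟨n, a, ha, rfl⟩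

theorem conj_commutatorElement_of_commute {x g : G} (hg : Commute g x) (a : G) :
    g * ⁅x, a⁆ * g⁻¹ = ⁅x, g * a * g⁻¹⁆ := by
  rw [conjugate_commutatorElement, hg.eq, mul_inv_cancel_right]

theorem commutatorElement_mem_of_normal {A : Subgroup G} [hN : A.Normal] (x : G) {a : G}
    (ha : a ∈ A) : ⁅x, a⁆ ∈ A :=
  A.mul_mem (hN.conj_mem a ha x) (A.inv_mem ha)

theorem commutator_le_of_zpowers_sup_eq_top {A N : Subgroup G} [A.Normal] [N.Normal] {x : G}
    (hA : ∀ a b : G, a ∈ A → b ∈ A → a * b = b * a) (hgen : zpowers x ⊔ A = ⊤)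
    (hxA : ∀ a ∈ A, ⁅x, a⁆ ∈ N) : _root_.commutator G ≤ N := by
  rw [_root_.commutator_def, commutator_le]
  intro g _ h _
  set π := QuotientGroup.mk' N
  have hker (y : G) : π y = 1 ↔ y ∈ N := QuotientGroup.eq_one_iff y
  have hx (a : G) (ha : a ∈ A) : Commute (π x) (π a) := by
    rw [← commutatorElement_eq_one_iff_commute, ← map_commutatorElement, hker]
    exact hxA a ha
  obtain ⟨i, a, ha, rfl⟩ := exists_eq_zpow_mul_of_zpowers_sup_eq_top hgen g
  obtain ⟨j, b, hb, rfl⟩ := exists_eq_zpow_mul_of_zpowers_sup_eq_top hgen h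
  have hab : Commute (π a) (π b) := by
    simp only [Commute, SemiconjBy, ← map_mul, hA a b ha hb]
  rw [← hker, map_commutatorElement, commutatorElement_eq_one_iff_commute, map_mul, map_mul,
    map_zpow, map_zpow]
  exact (((Commute.refl _).zpow_zpow i j).mul_right ((hx b hb).zpow_left i)).mul_left
    (((hx a ha).symm.zpow_right j).mul_right hab)

section CommutatorElementHom

variable {A : Subgroup G} [A.Normal] (hA : ∀ a b : G, a ∈ A → b ∈ A → a * b = b * a) (x : G)

def commutatorElementHom : A →* G where
  toFun a := ⁅x, (a : G)⁆
  map_one' := commutatorElement_one_right x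
  map_mul' a b := by
    rw [coe_mul, commutatorElement_mul_right_eq_mul_conj, mul_assoc _ (a : G),
      hA a _ a.2 (commutatorElement_mem_of_normal x b.2), ← mul_assoc, mul_inv_cancel_right]

theorem commutatorElementHom_apply (a : A) : commutatorElementHom hA x a = ⁅x, (a : G)⁆ := rfl

theorem mem_ker_commutatorElementHom {a : A} :
    a ∈ (commutatorElementHom hA x).ker ↔ x * a = a * x :=
  commutatorElement_eq_one_iff_mul_comm

theorem range_commutatorElementHom_normal (hgen : zpowers x ⊔ A = ⊤) :
    (commutatorElementHom hA x).range.Normal := by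
  constructor
  rintro _ ⟨b, rfl⟩ g
  obtain ⟨n, a, ha, rfl⟩ := exists_eq_zpow_mul_of_zpowers_sup_eq_top hgen g
  have hb : x ^ n * b * (x ^ n)⁻¹ ∈ A := ‹A.Normal›.conj_mem b b.2 _
  refine ⟨⟨_, hb⟩, ?_⟩
  have ha_conj : a * ⁅x, (b : G)⁆ * a⁻¹ = ⁅x, (b : G)⁆ := by
    rw [hA a _ ha (commutatorElement_mem_of_normal x b.2), mul_inv_cancel_right]
  calc ⁅x, x ^ n * b * (x ^ n)⁻¹⁆
      = x ^ n * ⁅x, (b : G)⁆ * (x ^ n)⁻¹ :=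
        (conj_commutatorElement_of_commute (Commute.zpow_self x n) b).symm
    _ = x ^ n * (a * ⁅x, (b : G)⁆ * a⁻¹) * (x ^ n)⁻¹ := by rw [ha_conj]
    _ = x ^ n * a * ⁅x, (b : G)⁆ * (x ^ n * a)⁻¹ := by group

theorem range_commutatorElementHom (hgen : zpowers x ⊔ A = ⊤) :
    (commutatorElementHom hA x).range = _root_.commutator G := by
  have := range_commutatorElementHom_normal hA x hgen
  refine le_antisymm ?_ (commutator_le_of_zpowers_sup_eq_top hA hgen fun a ha => ⟨⟨a, ha⟩, rfl⟩)
  rintro _ ⟨a, rfl⟩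
  exact commutator_mem_commutator (mem_top x) (mem_top (a : G))

end CommutatorElementHom

end Subgroup

theorem stmt0_general (G : Type*) [Group G] (A : Subgroup G) [A.Normal]
    (hA : ∀ a b : G, a ∈ A → b ∈ A → a * b = b * a)
    (x : G) (hgen : Subgroup.zpowers x ⊔ A = ⊤) :
    ∃ f : A →* G,
      (∀ a : A, f a = x * a * x⁻¹ * (a : G)⁻¹) ∧
      f.range = commutator G ∧
      (∀ a : A, f a = 1 ↔ x * a = a * x) ∧
      Nat.card (commutator G) * Nat.card {a : A // x * a = a * x} = Nat.card A := by
  set f := Subgroup.commutatorElementHom hA x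
  have hker : Nat.card f.ker = Nat.card {a : A // x * a = a * x} :=
    Nat.card_congr (Equiv.subtypeEquivRight fun _ => Subgroup.mem_ker_commutatorElementHom hA x)
  refine ⟨f, Subgroup.commutatorElementHom_apply hA x,
    Subgroup.range_commutatorElementHom hA x hgen,
    fun _ => Subgroup.mem_ker_commutatorElementHom hA x, ?_⟩
  rw [← Subgroup.range_commutatorElementHom hA x hgen, ← hker, ← Subgroup.index_ker, mul_comm,
    Subgroup.card_mul_index]

/-- Let `A` be an abelian normal subgroup of a finite group `G` with `G = ⟨x⟩A`.
Then `a ↦ [x,a]` is a homomorphism from `A` onto the commutator subgroup `G'`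
with kernel `C_A(x)`; in particular `|G'| = |A : C_A(x)|`. -/
theorem stmt0 (G : Type*) [Group G] [Finite G] (A : Subgroup G) [A.Normal]
    (hA : ∀ a b : G, a ∈ A → b ∈ A → a * b = b * a)
    (x : G) (hgen : Subgroup.zpowers x ⊔ A = ⊤) :
    ∃ f : A →* G,
      (∀ a : A, f a = x * a * x⁻¹ * (a : G)⁻¹) ∧
      f.range = commutator G ∧
      (∀ a : A, f a = 1 ↔ x * a = a * x) ∧
      Nat.card (commutator G) * Nat.card {a : A // x * a = a * x} = Nat.card A :=
  stmt0_general G A hA x hgen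
end

section
/- For a finite p-group P, if |P : Φ(P)| = p² and |P'| = p, then P is minimal non-abelian, i.e. P is non-abelian and every proper subgroup of P is abelian. -/
/-!
Every conjugacy class of `P` lies in a coset of `P'`, so every centralizer has index at most
`|P'| = p`, hence index `1` or `p`; in the latter case it is a maximal subgroup. Therefore `Φ(P)`
lies in every centralizer, i.e. `Φ(P) ≤ Z(P)`. A proper subgroup lies in a maximal subgroup `M`,
and `|M : Φ(P)|` divides `p` because `|P : Φ(P)| = p²` and `p ∣ |P : M|`. So `M / Φ(P)` is
cyclic with central kernel, and `M` is abelian. Finally `P` is not abelian because `P' ≠ 1`.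
-/

section

open Subgroup

variable {G : Type*} [Group G]

theorem Subgroup.isCoatom_of_index_prime {H : Subgroup G} (hH : H.index.Prime) : IsCoatom H := by
  have : H.FiniteIndex := ⟨hH.ne_zero⟩
  refine ⟨fun htop => by simp [htop, Nat.not_prime_one] at hH, fun K hK => index_eq_one.mp ?_⟩
  exact ((Nat.dvd_prime hH).mp (index_dvd_of_le hK.le)).resolve_right (index_strictAnti hK).ne

theorem index_centralizer_le_card_commutator [Finite G] (g : G) :
    (centralizer {g}).index ≤ Nat.card (commutator G) :=
  Finite.card_le_of_embedding <| (quotientCentralizerEmbedding g).trans <|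
    Set.embeddingOfSubset _ _ <| commutator_eq_closure G ▸ subset_closure

theorem IsPGroup.frattini_le_center_of_card_commutator_le {p : ℕ} [Fact p.Prime] [Finite G]
    (hG : IsPGroup p G) (hcomm : Nat.card (commutator G) ≤ p) : frattini G ≤ center G := by
  intro g hg
  refine mem_center_iff.mpr fun y => ?_
  suffices frattini G ≤ centralizer {y} from this hg y rfl
  obtain ⟨n, hn⟩ := hG.index (centralizer {y})
  have hle : p ^ n ≤ p ^ 1 := hn ▸ (index_centralizer_le_card_commutator y).trans (by simpa)
  rcases Nat.le_one_iff_eq_zero_or_eq_one.mp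
    ((Nat.pow_le_pow_iff_right (Fact.out : p.Prime).one_lt).mp hle) with rfl | rfl
  · simp [index_eq_one.mp (hn.trans (pow_zero p))]
  · exact frattini_le_coatom (isCoatom_of_index_prime (hn.trans (pow_one p) ▸ Fact.out))

theorem IsPGroup.relIndex_frattini_dvd_of_isCoatom {p : ℕ} [Fact p.Prime] [Finite G]
    (hG : IsPGroup p G) (hfrat : (frattini G).index = p ^ 2) {M : Subgroup G} (hM : IsCoatom M) :
    (frattini G).relIndex M ∣ p := by
  obtain ⟨n, hn⟩ := hG.index M
  have hn0 : n ≠ 0 := by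
    rintro rfl
    exact hM.1 (index_eq_one.mp hn)
  obtain ⟨k, hk⟩ : p ∣ M.index := hn ▸ dvd_pow_self p hn0
  have hprod := relIndex_mul_index (frattini_le_coatom hM)
  rw [hfrat, hk, sq, mul_left_comm] at hprod
  exact ⟨k, (Nat.eq_of_mul_eq_mul_left (Fact.out : p.Prime).pos hprod).symm⟩

theorem Subgroup.mul_comm_of_isCyclic_quotient {N K : Subgroup G} [N.Normal]
    (hN : N ≤ center G) [IsCyclic (K ⧸ N.subgroupOf K)] {a b : G} (ha : a ∈ K)
    (hb : b ∈ K) :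
    a * b = b * a := by
  have hK : IsMulCommutative K :=
    (QuotientGroup.mk' (N.subgroupOf K)).isMulCommutative_of_isCyclic_of_ker_le_center <| by
      rw [QuotientGroup.ker_mk']
      exact fun x hx => mem_center_iff.mpr fun y => Subtype.ext (mem_center_iff.mp (hN hx) y)
  exact congrArg Subtype.val (hK.is_comm.comm ⟨a, ha⟩ ⟨b, hb⟩)

end

/-- For a finite `p`-group `P`, if `|P : Φ(P)| = p²` and `|P'| = p`, then `P` is minimal
non-abelian: non-abelian, but every proper subgroup is abelian. -/
theorem stmt3 (p : ℕ) [Fact p.Prime] (P : Type*) [Group P] [Finite P] (hP : IsPGroup p P)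
    (hfrat : (frattini P).index = p ^ 2)
    (hcomm : Nat.card (commutator P) = p) :
    (¬ ∀ a b : P, a * b = b * a) ∧
      ∀ H : Subgroup P, H ≠ ⊤ → ∀ a ∈ H, ∀ b ∈ H, a * b = b * a := by
  refine ⟨fun hab => ?_, fun H hH a ha b hb => ?_⟩
  · have : IsMulCommutative P := ⟨⟨hab⟩⟩
    rw [(commutator_eq_bot_iff P).mpr this, Subgroup.card_bot] at hcomm
    exact (Fact.out : p.Prime).one_lt.ne hcomm
  · obtain ⟨M, hM, hHM⟩ := (eq_top_or_exists_le_coatom H).resolve_left hH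
    have : IsCyclic (M ⧸ (frattini P).subgroupOf M) :=
      isCyclic_of_card_dvd_prime (hP.relIndex_frattini_dvd_of_isCoatom hfrat hM)
    exact Subgroup.mul_comm_of_isCyclic_quotient
      (hP.frattini_le_center_of_card_commutator_le hcomm.le) (hHM ha) (hHM hb)
end

section
/- For a finite p-group P, if P is minimal non-abelian (non-abelian but every proper subgroup is abelian), then |P : Φ(P)| = p² and |P : Z(P)| = p², and moreover Φ(P) = Z(P). -/
open scoped Pointwise

/-- In a finite `p`-group, every maximal subgroup has index `p`. -/
lemma coatom_index_eq_p {p : ℕ} [Fact p.Prime] {P : Type*} [Group P] [Finite P]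
    (hP : IsPGroup p P) {M : Subgroup P} (hM : IsCoatom M) : M.index = p := by
  have h02 : Group.IsNilpotent P ↔ ∀ H : Subgroup P, IsCoatom H → H.Normal :=
    (isNilpotent_of_finite_tfae (G := P)).out 0 2
  have hnorm : M.Normal := h02.mp hP.isNilpotent M hM
  have hQ : IsPGroup p (P ⧸ M) := hP.to_quotient M
  obtain ⟨n, hn⟩ := hQ.exists_card_eq
  have hcard : M.index = Nat.card (P ⧸ M) := Subgroup.index_eq_card M
  have hne1 : M.index ≠ 1 := fun h => hM.1 (Subgroup.index_eq_one.mp h)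
  have hn0 : n ≠ 0 := by
    rintro rfl
    exact hne1 (by rw [hcard, hn, pow_zero])
  -- suppose n ≥ 2 and derive a contradiction
  have hn1 : n = 1 := by
    by_contra hn1
    have hpdvd : p ∣ Nat.card (P ⧸ M) := by
      rw [hn]
      exact dvd_pow_self p hn0
    obtain ⟨g, hg⟩ := exists_prime_orderOf_dvd_card' (G := P ⧸ M) p hpdvd
    have hg1 : g ≠ 1 := by
      intro h
      rw [h, orderOf_one] at hg
      exact (Fact.out : p.Prime).one_lt.ne' hg.symm
    have hcardzp : Nat.card (Subgroup.zpowers g) = p := by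
      rw [Nat.card_zpowers, hg]
    have hzpne : Subgroup.zpowers g ≠ ⊤ := by
      intro h
      have hcq : Nat.card (Subgroup.zpowers g) = Nat.card (P ⧸ M) := by
        rw [h, Subgroup.card_top]
      rw [hcardzp, hn] at hcq
      have hpow : p ^ 1 = p ^ n := by rw [pow_one]; exact hcq
      exact hn1 (Nat.pow_right_injective (Fact.out : p.Prime).two_le hpow).symm
    have hMK : M < Subgroup.comap (QuotientGroup.mk' M) (Subgroup.zpowers g) := by
      constructor
      · intro x hx
        have hx1 : QuotientGroup.mk' M x = 1 := by
          rw [← QuotientGroup.ker_mk' M] at hx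
          exact hx
        show QuotientGroup.mk' M x ∈ Subgroup.zpowers g
        rw [hx1]
        exact one_mem _
      · intro hle
        obtain ⟨x, hx⟩ := QuotientGroup.mk'_surjective M g
        have hxK : x ∈ Subgroup.comap (QuotientGroup.mk' M) (Subgroup.zpowers g) := by
          show QuotientGroup.mk' M x ∈ Subgroup.zpowers g
          rw [hx]
          exact Subgroup.mem_zpowers g
        have hxM : x ∈ M := hle hxK
        have hx1 : QuotientGroup.mk' M x = 1 := by
          rw [← QuotientGroup.ker_mk' M] at hxM
          exact hxM
        exact hg1 (hx ▸ hx1)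
    have hKtop : Subgroup.comap (QuotientGroup.mk' M) (Subgroup.zpowers g) = ⊤ :=
      hM.2 _ hMK
    apply hzpne
    rw [← Subgroup.map_comap_eq_self_of_surjective (QuotientGroup.mk'_surjective M)
      (Subgroup.zpowers g), hKtop,
      Subgroup.map_top_of_surjective _ (QuotientGroup.mk'_surjective M)]
  rw [hcard, hn, hn1, pow_one]

/-- For a finite `p`-group `P`, if `P` is minimal non-abelian, then
`|P : Φ(P)| = p² = |P : Z(P)|` and `Φ(P) = Z(P)`. -/
theorem stmt4 (p : ℕ) [Fact p.Prime] (P : Type*) [Group P] [Finite P] (hP : IsPGroup p P)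
    (hna : ¬ ∀ a b : P, a * b = b * a)
    (hmin : ∀ H : Subgroup P, H ≠ ⊤ → ∀ a ∈ H, ∀ b ∈ H, a * b = b * a) :
    (frattini P).index = p ^ 2 ∧ (Subgroup.center P).index = p ^ 2 ∧
      frattini P = Subgroup.center P := by
  push_neg at hna
  obtain ⟨a, b, hab⟩ := hna
  have hp := (Fact.out : p.Prime)
  -- centralizers of a and b
  set Ca := Subgroup.centralizer {a} with hCa
  set Cb := Subgroup.centralizer {b} with hCb
  have haCa : a ∈ Ca := Subgroup.mem_centralizer_iff.mpr (by rintro y rfl; rfl)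
  have hbCb : b ∈ Cb := Subgroup.mem_centralizer_iff.mpr (by rintro y rfl; rfl)
  have hbCa : b ∉ Ca := by
    intro h
    exact hab (Subgroup.mem_centralizer_iff.mp h a rfl)
  have haCb : a ∉ Cb := by
    intro h
    exact hab (Subgroup.mem_centralizer_iff.mp h b rfl).symm
  have hCane : Ca ≠ ⊤ := fun h => hbCa (h ▸ Subgroup.mem_top b)
  have hCbne : Cb ≠ ⊤ := fun h => haCb (h ▸ Subgroup.mem_top a)
  -- centralizer of a noncentral element is a maximal subgroup
  have hcoatom : ∀ (x : P) (C : Subgroup P), C = Subgroup.centralizer {x} → x ∈ C → C ≠ ⊤ →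
      IsCoatom C := by
    intro x C hC hxC hCne
    refine ⟨hCne, fun K hK => ?_⟩
    by_contra hKne
    have hxK : x ∈ K := hK.le hxC
    have hKle : K ≤ C := by
      intro y hy
      rw [hC]
      refine Subgroup.mem_centralizer_iff.mpr ?_
      intro z hz
      have hzx : z = x := hz
      rw [hzx]
      exact hmin K hKne x hxK y hy
    exact lt_irrefl C (lt_of_lt_of_le hK hKle)
  have hCaco : IsCoatom Ca := hcoatom a Ca hCa haCa hCane
  have hCbco : IsCoatom Cb := hcoatom b Cb hCb hbCb hCbne
  have hCaidx : Ca.index = p := coatom_index_eq_p hP hCaco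
  have hCbidx : Cb.index = p := coatom_index_eq_p hP hCbco
  -- ⟨a, b⟩ = ⊤
  have habtop : Subgroup.closure {a, b} = ⊤ := by
    by_contra h
    exact hab (hmin _ h a (Subgroup.subset_closure (by simp)) b
      (Subgroup.subset_closure (by simp)))
  -- Z = Ca ⊓ Cb
  have hZ : Subgroup.center P = Ca ⊓ Cb := by
    apply le_antisymm
    · intro z hz
      refine ⟨Subgroup.mem_centralizer_iff.mpr ?_, Subgroup.mem_centralizer_iff.mpr ?_⟩ <;>
        · rintro y rfl
          exact Subgroup.mem_center_iff.mp hz _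
    · rintro z ⟨hza, hzb⟩
      rw [Subgroup.mem_center_iff]
      intro g
      have hza' : a * z = z * a := Subgroup.mem_centralizer_iff.mp hza a rfl
      have hzb' : b * z = z * b := Subgroup.mem_centralizer_iff.mp hzb b rfl
      have hg : g ∈ Subgroup.closure ({a, b} : Set P) := habtop ▸ Subgroup.mem_top g
      induction hg using Subgroup.closure_induction with
      | mem y hy =>
        rcases hy with rfl | rfl
        · exact hza'
        · exact hzb'
      | one => simp
      | mul u v _ _ hu hv =>
        exact Commute.mul_left (hu : Commute u z) (hv : Commute v z)
      | inv u _ hu =>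
        exact Commute.inv_left (hu : Commute u z)
  -- index of the center
  have haZ : a ∉ Subgroup.center P := by
    intro h
    exact hab (Subgroup.mem_center_iff.mp h b).symm
  have hZle : Subgroup.center P ≤ Ca := hZ ▸ inf_le_left
  have hZidx_le : (Subgroup.center P).index ≤ p ^ 2 := by
    rw [hZ, sq]
    exact le_of_le_of_eq Subgroup.index_inf_le (by rw [hCaidx, hCbidx])
  have hrel : (Subgroup.center P).relIndex Ca * Ca.index = (Subgroup.center P).index :=
    Subgroup.relIndex_mul_index hZle
  have hrelne1 : (Subgroup.center P).relIndex Ca ≠ 1 := by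
    intro h
    exact haZ (Subgroup.relIndex_eq_one.mp h haCa)
  have hZidx_ne : (Subgroup.center P).index ≠ 0 := Subgroup.index_ne_zero_of_finite
  have hrelne0 : (Subgroup.center P).relIndex Ca ≠ 0 := by
    intro h
    rw [← hrel, h, zero_mul] at hZidx_ne
    exact hZidx_ne rfl
  obtain ⟨n, hn⟩ := hP.exists_card_eq
  have hZdvd : (Subgroup.center P).index ∣ p ^ n := by
    rw [← hn]
    exact Subgroup.index_dvd_card (G := P) (H := Subgroup.center P)
  have hreldvd : (Subgroup.center P).relIndex Ca ∣ p ^ n :=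
    dvd_trans (Dvd.intro _ hrel) hZdvd
  obtain ⟨i, _, hi⟩ := (Nat.dvd_prime_pow hp).mp hreldvd
  have hpdvdrel : p ∣ (Subgroup.center P).relIndex Ca := by
    rcases Nat.eq_zero_or_pos i with rfl | hipos
    · exact absurd (by simpa using hi) hrelne1
    · exact hi ▸ dvd_pow_self p hipos.ne'
  have hZidx_ge : p ^ 2 ≤ (Subgroup.center P).index := by
    rw [← hrel, hCaidx, sq]
    exact Nat.mul_le_mul_right p (Nat.le_of_dvd (Nat.pos_of_ne_zero hrelne0) hpdvdrel)
  have hZidx : (Subgroup.center P).index = p ^ 2 := le_antisymm hZidx_le hZidx_ge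
  -- Frattini = center
  have hfrZ : frattini P = Subgroup.center P := by
    apply le_antisymm
    · -- frattini ≤ center, via nongenerating property
      intro x hx
      rw [Subgroup.mem_center_iff]
      intro g
      set K := Subgroup.zpowers g ⊔ frattini P with hK
      have hKne : K ≠ ⊤ := by
        intro htop
        have hzt : Subgroup.zpowers g = ⊤ := frattini_nongenerating htop
        -- P is cyclic, hence abelian: contradiction
        obtain ⟨m, hm⟩ := hzt ▸ Subgroup.mem_top a
        obtain ⟨k, hk⟩ := hzt ▸ Subgroup.mem_top b
        exact hab (by rw [← hm, ← hk, ← zpow_add, ← zpow_add, add_comm])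
      exact hmin K hKne g
        ((le_sup_left : Subgroup.zpowers g ≤ K) (Subgroup.mem_zpowers g)) x
        ((le_sup_right : frattini P ≤ K) hx)
    · -- center ≤ frattini: the center is contained in every maximal subgroup
      have hle : ∀ M : Subgroup P, IsCoatom M → Subgroup.center P ≤ M := by
        intro M hM
        by_contra hle
        have hlt : M < M ⊔ Subgroup.center P := by
          rcases SetLike.not_le_iff_exists.mp hle with ⟨z, hz, hzM⟩
          exact lt_of_le_of_ne le_sup_left (fun h => hzM
            (h ▸ (le_sup_right : Subgroup.center P ≤ M ⊔ Subgroup.center P) hz))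
        have htop : M ⊔ Subgroup.center P = ⊤ := hM.2 _ hlt
        -- then P would be abelian
        apply hab
        have hmem : ∀ g : P, g ∈ ((M : Set P) * (Subgroup.center P : Set P)) := by
          intro g
          rw [← Subgroup.mul_normal M (Subgroup.center P), htop]
          simp
        obtain ⟨ma, hma, za, hza, hae⟩ := hmem a
        obtain ⟨mb, hmb, zb, hzb, hbe⟩ := hmem b
        have hcomm : ma * mb = mb * ma := hmin M hM.1 ma hma mb hmb
        have hza' := Subgroup.mem_center_iff.mp hza
        have hzb' := Subgroup.mem_center_iff.mp hzb
        rw [← hae, ← hbe]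
        exact Commute.mul_left
          (Commute.mul_right (hcomm : Commute ma mb) ((hzb' ma) : Commute ma zb))
          (Commute.mul_right (((hza' mb).symm) : Commute za mb)
            (((hza' zb).symm) : Commute za zb))
      show Subgroup.center P ≤ ⨅ M ∈ {H : Subgroup P | IsCoatom H}, M
      exact le_iInf fun M => le_iInf fun hM => hle M hM
  exact ⟨hfrZ ▸ hZidx, hZidx, hfrZ⟩
end

section
/- Let P be a finite p-group and Q ≤ P a non-abelian subgroup of order p³ and exponent p with C_P(Q) = Z(Q). Then the second center Z₂(P) of P is contained in Q. -/
/-!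
For `z ∈ Z₂(P)` the map `q ↦ ⁅z, q⁆` is a homomorphism from `Q` into `Z(P) ≤ C_P(Q) = Z(Q)`.
In a non-abelian group `Q` of order `p³` every homomorphism `f : Q → Z(Q)` is of the form
`q ↦ ⁅g, q⁆` with `g ∈ Q`: if `f ≠ 1`, its kernel `K` is abelian of index `p`, and for `q ∉ K`
the map `k ↦ ⁅q, k⁆` sends `K` onto `Z(Q)`, so some `g ∈ K` has `⁅g, q⁆ = f q`; then `f` and
`⁅g, ·⁆` agree on `K` and at `q`, which generate `Q`. Hence `g⁻¹ z ∈ C_P(Q) ≤ Q` and `z ∈ Q`.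
-/

open scoped commutatorElement

namespace Subgroup

variable {G : Type*} [Group G]

theorem eq_of_le_of_card_prime {H K : Subgroup G} (hle : H ≤ K) (hK : (Nat.card K).Prime)
    (hH : H ≠ ⊥) : H = K := by
  have := Nat.finite_of_card_ne_zero hK.ne_zero
  have hHK : Nat.card H = Nat.card K :=
    ((Nat.dvd_prime hK).1 (card_dvd_of_le hle)).resolve_left (mt card_eq_one.1 hH)
  exact eq_of_le_of_card_ge hle hHK.ge

theorem sup_zpowers_eq_top_of_index_prime {K : Subgroup G} (hK : K.index.Prime) {x : G}
    (hx : x ∉ K) : K ⊔ zpowers x = ⊤ := by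
  have hle : K ≤ K ⊔ zpowers x := le_sup_left
  rcases (Nat.dvd_prime hK).1 (index_dvd_of_le hle) with h | h
  · exact index_eq_one.1 h
  · have h1 : K.relIndex (K ⊔ zpowers x) = 1 := by
      have := relIndex_mul_index hle
      rw [h] at this
      exact (Nat.mul_eq_right hK.ne_zero).1 this
    exact absurd (relIndex_eq_one.1 h1 (le_sup_right (a := K) (mem_zpowers x))) hx

end Subgroup

section CommutatorHom

open Subgroup

variable {G : Type*} [Group G]

def commutatorHomOfCentral (g : G) (hg : ∀ y, ⁅g, y⁆ ∈ center G) : G →* G where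
  toFun y := ⁅g, y⁆
  map_one' := commutatorElement_one_right g
  map_mul' x y := by
    have hy := mem_center_iff.1 (hg y) x
    simp only [commutatorElement_def] at hy ⊢
    calc g * (x * y) * g⁻¹ * (x * y)⁻¹
        = g * x * g⁻¹ * x⁻¹ * (x * (g * y * g⁻¹ * y⁻¹) * x⁻¹) := by group
      _ = g * x * g⁻¹ * x⁻¹ * (g * y * g⁻¹ * y⁻¹) := by rw [hy]; group

theorem commute_inv_mul_of_commutatorElement_eq {a b y : G} (h : ⁅a, y⁆ = ⁅b, y⁆) :
    Commute (b⁻¹ * a) y := by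
  rw [commutatorElement_def, commutatorElement_def] at h
  calc b⁻¹ * a * y = b⁻¹ * (a * y * a⁻¹ * y⁻¹) * y * a := by group
    _ = b⁻¹ * (b * y * b⁻¹ * y⁻¹) * y * a := by rw [h]
    _ = y * (b⁻¹ * a) := by group

end CommutatorHom

section CardPrimeCube

open Subgroup

variable {p : ℕ} [Fact p.Prime] {G : Type*} [Group G]
  (hG : Nat.card G = p ^ 3) (hna : ¬ ∀ a b : G, a * b = b * a)
include hG hna

theorem card_center_eq_prime_of_card_eq_prime_pow_three : Nat.card (center G) = p := by
  obtain ⟨k, hk0, hk⟩ := IsPGroup.card_center_eq_prime_pow hG (by norm_num)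
  have hk3 : k ≤ 3 :=
    (Nat.pow_dvd_pow_iff_le_right (Fact.out : p.Prime).one_lt).1
      (hk ▸ hG ▸ card_subgroup_dvd_card _)
  have hmul := (center G).card_mul_index
  rw [hk, hG] at hmul
  interval_cases k
  · rw [hk, pow_one]
  · have hindex : (center G).index = p := by
      rw [pow_succ] at hmul
      exact Nat.eq_of_mul_eq_mul_left (pow_pos (Fact.out : p.Prime).pos 2) hmul
    have : IsCyclic (G ⧸ center G) :=
      isCyclic_of_prime_card (p := p) (by rw [← index_eq_card, hindex])
    exact (hna ((QuotientGroup.mk' (center G)).isMulCommutative_of_isCyclic_of_ker_le_center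
      (QuotientGroup.ker_mk' _).le).is_comm.comm).elim
  · have hindex : (center G).index = 1 :=
      Nat.eq_of_mul_eq_mul_left (pow_pos (Fact.out : p.Prime).pos 3) (by rw [hmul, mul_one])
    exact absurd (fun a b => (mem_center_iff.1 (index_eq_one.1 hindex ▸ mem_top a) b).symm) hna

theorem commutatorElement_mem_center_of_card_eq_prime_pow_three (a b : G) :
    ⁅a, b⁆ ∈ center G := by
  have hindex : (center G).index = p ^ 2 := by
    have hmul := (center G).card_mul_index
    rw [card_center_eq_prime_of_card_eq_prime_pow_three hG hna, hG, pow_succ, mul_comm] at hmul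
    exact Nat.eq_of_mul_eq_mul_right (Fact.out : p.Prime).pos hmul
  have hcomm := IsPGroup.isMulCommutative_of_card_eq_prime_sq (G := G ⧸ center G)
    (by rwa [← index_eq_card])
  exact Normal.quotient_commutative_iff_commutator_le.1 hcomm
    (commutator_mem_commutator (mem_top a) (mem_top b))

theorem center_le_ker_of_forall_mem_center (f : G →* G) (hf : ∀ x, f x ∈ center G) :
    center G ≤ f.ker := by
  obtain ⟨a, b, hab⟩ : ∃ a b : G, a * b ≠ b * a := by simpa using hna
  have hc : ⁅a, b⁆ ∈ center G ⊓ f.ker := by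
    refine ⟨commutatorElement_mem_center_of_card_eq_prime_pow_three hG hna a b,
      MonoidHom.mem_ker.2 ?_⟩
    rw [map_commutatorElement, commutatorElement_eq_one_iff_mul_comm]
    exact (mem_center_iff.1 (hf a) (f b)).symm
  have hinf : center G ⊓ f.ker = center G := eq_of_le_of_card_prime inf_le_left
    (card_center_eq_prime_of_card_eq_prime_pow_three hG hna ▸ Fact.out)
    (ne_bot_iff_exists_ne_one.2 ⟨⟨_, hc⟩, by simpa [commutatorElement_eq_one_iff_mul_comm]⟩)
  exact hinf ▸ inf_le_right

theorem exists_commutatorElement_eq_of_sup_zpowers_eq_top {K : Subgroup G} {q : G}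
    (hq : q ∉ center G) (hKq : K ⊔ zpowers q = ⊤) {c : G} (hc : c ∈ center G) :
    ∃ k ∈ K, ⁅q, k⁆ = c := by
  set φ := commutatorHomOfCentral q
    (commutatorElement_mem_center_of_card_eq_prime_pow_three hG hna q)
  have hle : K.map φ ≤ center G := by
    rintro _ ⟨k, -, rfl⟩
    exact commutatorElement_mem_center_of_card_eq_prime_pow_three hG hna q k
  have hne : K.map φ ≠ ⊥ := by
    intro hbot
    refine hq ((centralizer_eq_top_iff_subset (s := {q})).1
      (eq_top_iff.2 (hKq ▸ sup_le ?_ ?_)) rfl)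
    · intro k hk
      have : ⁅q, k⁆ ∈ K.map φ := ⟨k, hk, rfl⟩
      rw [hbot, mem_bot, commutatorElement_eq_one_iff_mul_comm] at this
      exact mem_centralizer_singleton_iff.2 this.symm
    · exact zpowers_le.2 (mem_centralizer_singleton_iff.2 rfl)
  have hmap : K.map φ = center G := eq_of_le_of_card_prime hle
    (card_center_eq_prime_of_card_eq_prime_pow_three hG hna ▸ Fact.out) hne
  obtain ⟨k, hk, rfl⟩ : c ∈ K.map φ := hmap ▸ hc
  exact ⟨k, hk, rfl⟩

theorem exists_commutatorElement_eq_of_forall_mem_center (f : G →* G)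
    (hf : ∀ x, f x ∈ center G) : ∃ g : G, ∀ x, f x = ⁅g, x⁆ := by
  by_cases htriv : ∀ x, f x = 1
  · exact ⟨1, fun x => by rw [htriv, commutatorElement_one_left]⟩
  obtain ⟨q, hq⟩ : ∃ q, f q ≠ 1 := by simpa using htriv
  have hZ := card_center_eq_prime_of_card_eq_prime_pow_three hG hna
  have hrange : f.range = center G :=
    eq_of_le_of_card_prime (by rintro _ ⟨x, rfl⟩; exact hf x) (hZ ▸ Fact.out)
      (ne_bot_iff_exists_ne_one.2 ⟨⟨f q, q, rfl⟩, fun h => hq (congrArg Subtype.val h)⟩)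
  have hindex : f.ker.index = p := by rw [index_ker, hrange, hZ]
  have hcardK : Nat.card f.ker = p ^ 2 := by
    have hmul := f.ker.card_mul_index
    rw [hindex, hG, pow_succ] at hmul
    exact Nat.eq_of_mul_eq_mul_right (Fact.out : p.Prime).pos hmul
  have hqK : q ∉ f.ker := by rwa [MonoidHom.mem_ker]
  have hKq : f.ker ⊔ zpowers q = ⊤ := sup_zpowers_eq_top_of_index_prime (hindex ▸ Fact.out) hqK
  obtain ⟨g, hgK, hg⟩ := exists_commutatorElement_eq_of_sup_zpowers_eq_top hG hna
    (fun h => hqK (center_le_ker_of_forall_mem_center hG hna f hf h)) hKq (inv_mem (hf q))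
  have hKcomm := IsPGroup.isMulCommutative_of_card_eq_prime_sq hcardK
  set φ := commutatorHomOfCentral g
    (commutatorElement_mem_center_of_card_eq_prime_pow_three hG hna g)
  have hlocus : f.eqLocus φ = ⊤ := by
    refine eq_top_iff.2 (hKq ▸ sup_le (fun k hk => ?_) (zpowers_le.2 ?_))
    · change f k = ⁅g, k⁆
      rw [MonoidHom.mem_ker.1 hk, eq_comm, commutatorElement_eq_one_iff_mul_comm]
      exact congrArg Subtype.val (hKcomm.is_comm.comm ⟨g, hgK⟩ ⟨k, hk⟩)
    · change f q = ⁅g, q⁆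
      rw [← commutatorElement_inv, hg, inv_inv]
  exact ⟨g, fun x => (hlocus ▸ mem_top x : x ∈ f.eqLocus φ)⟩

end CardPrimeCube

theorem stmt7_general (p : ℕ) [Fact p.Prime] (P : Type*) [Group P]
    (Q : Subgroup P) (hcard : Nat.card Q = p ^ 3)
    (hna : ¬ ∀ a b : Q, a * b = b * a)
    (hcent : Subgroup.centralizer (Q : Set P) = Subgroup.map Q.subtype (Subgroup.center Q)) :
    upperCentralSeries P 2 ≤ Q := by
  intro z hz
  have hzZ : ∀ y, ⁅z, y⁆ ∈ Subgroup.center P := by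
    simpa only [Subgroup.upperCentralSeries_one] using
      (Subgroup.mem_upperCentralSeries_succ_iff (n := 1)).1 hz
  have hZP : Subgroup.center P ≤ (Subgroup.center Q).map Q.subtype :=
    hcent ▸ Subgroup.center_le_centralizer _
  let f : Q →* Q := ((commutatorHomOfCentral z hzZ).comp Q.subtype).codRestrict Q
    fun q => Subgroup.map_subtype_le _ (hZP (hzZ q))
  have hf : ∀ q, f q ∈ Subgroup.center Q := fun q =>
    (Subgroup.mem_map_iff_mem Q.subtype_injective).1 (hZP (hzZ q))
  obtain ⟨g, hg⟩ := exists_commutatorElement_eq_of_forall_mem_center hcard hna f hf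
  have hgz : (g : P)⁻¹ * z ∈ Subgroup.centralizer (Q : Set P) := fun q hq =>
    (commute_inv_mul_of_commutatorElement_eq (congrArg Subtype.val (hg ⟨q, hq⟩))).symm.eq
  rw [← mul_inv_cancel_left (g : P) z]
  exact Q.mul_mem g.2 (Subgroup.map_subtype_le _ (hcent ▸ hgz))

/-- Let `P` be a finite `p`-group and `Q ≤ P` non-abelian of order `p³` and exponent `p`
with `C_P(Q) = Z(Q)`. Then `Z₂(P) ≤ Q`. -/
theorem stmt7 (p : ℕ) [Fact p.Prime] (P : Type*) [Group P] [Finite P] (hP : IsPGroup p P)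
    (Q : Subgroup P) (hcard : Nat.card Q = p ^ 3)
    (hna : ¬ ∀ a b : Q, a * b = b * a)
    (hexp : Monoid.exponent Q = p)
    (hcent : Subgroup.centralizer (Q : Set P) = Subgroup.map Q.subtype (Subgroup.center Q)) :
    upperCentralSeries P 2 ≤ Q :=
  stmt7_general p P Q hcard hna hcent
end

section
/- Let G be a finite group with Sylow p-subgroup P of maximal class, |P| = p³, and let N ⊴ G with |N|_p = p². Then for every element x ∈ P \ N, no G-conjugate of x lies in N, and |C_G(x)|_p = p². -/
/-!
Every Sylow `p`-subgroup `Q` is non-abelian of order `p³` and meets `N` in an abelian subgroup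
of index `p`; if some `z ∈ Z(Q)` lay outside `N`, then `Q = (Q ∩ N) Z(Q)` would be abelian.
So `Z(Q) ≤ N` for every `Q`, and `x ∉ N` is central in no Sylow subgroup, which forces
`|C_G(x)|_p < p³`. Conversely `C_P(x)` is either `P` or properly contains the nontrivial `Z(P)`,
so `|C_G(x)|_p ≥ p²`.
-/

open Subgroup

theorem Nat.dvd_ordProj_of_dvd_of_dvd_prime_pow {p n m k : ℕ} (hp : p.Prime) (hn : n ∣ p ^ k)
    (hnm : n ∣ m) (hm : m ≠ 0) : n ∣ ordProj[p] m := by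
  obtain ⟨i, -, rfl⟩ := (Nat.dvd_prime_pow hp).mp hn
  exact pow_dvd_pow p ((hp.pow_dvd_iff_le_factorization hm).mp hnm)

namespace Subgroup

variable {G : Type*} [Group G]

theorem eq_top_of_lt_of_index_prime {H K : Subgroup G} (hH : H.index.Prime) (hHK : H < K) :
    K = ⊤ := by
  rw [← relIndex_mul_index hHK.le, Nat.prime_mul_iff] at hH
  rcases hH with ⟨-, hK⟩ | ⟨-, hHK'⟩
  · exact index_eq_one.mp hK
  · exact absurd (relIndex_eq_one.mp hHK') hHK.not_ge

theorem center_le_of_index_prime {H : Subgroup G} [IsMulCommutative H] (hH : H.index.Prime)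
    (hG : ¬ ∀ a b : G, a * b = b * a) : center G ≤ H := by
  by_contra hZ
  have hsup : H ⊔ center G = ⊤ := eq_top_of_lt_of_index_prime hH (left_lt_sup.mpr hZ)
  have hHZ : H ≤ center G := by
    rw [← SetLike.coe_subset_coe, ← centralizer_eq_top_iff_subset, eq_top_iff, ← hsup]
    exact sup_le (le_centralizer H) (center_le_centralizer _)
  have hZ : center G = ⊤ := by
    rw [eq_top_iff, ← hsup]
    exact sup_le hHZ le_rfl
  exact hG fun a b => mem_center_iff.mp (hZ ▸ mem_top b) a

end Subgroup

namespace Sylow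

variable {G : Type*} [Group G] {p : ℕ} [Fact p.Prime]

theorem not_commutative_of_not_commutative [Finite G] {P : Sylow p G}
    (hP : ¬ ∀ a b : P, a * b = b * a) (Q : Sylow p G) : ¬ ∀ a b : Q, a * b = b * a :=
  fun hQ => hP fun a b => (equiv P Q).injective (by rw [map_mul, map_mul, hQ])

theorem card_subgroupOf_normal_and_relIndex [Finite G] (Q : Sylow p G) (N : Subgroup G)
    [N.Normal] :
    Nat.card (N.subgroupOf Q) = ordProj[p] (Nat.card N) ∧ N.relIndex Q = ordProj[p] N.index := by
  have hp : p.Prime := Fact.out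
  have hprod : Nat.card (N.subgroupOf Q) * N.relIndex Q =
      ordProj[p] (Nat.card N) * ordProj[p] N.index := by
    rw [relIndex, card_mul_index, Q.card_eq_multiplicity, ← N.card_mul_index,
      Nat.factorization_mul Nat.card_pos.ne' index_ne_zero_of_finite, Finsupp.add_apply, pow_add]
  have hcard : Nat.card (N.subgroupOf Q) ∣ ordProj[p] (Nat.card N) := by
    refine Nat.dvd_ordProj_of_dvd_of_dvd_prime_pow (k := (Nat.card G).factorization p) hp ?_ ?_
      Nat.card_pos.ne'
    · exact Q.card_eq_multiplicity ▸ card_subgroup_dvd_card _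
    · rw [← card_map_of_injective (Subgroup.subtype_injective (Q : Subgroup G)),
        subgroupOf_map_subtype]
      exact card_dvd_of_le inf_le_left
  have hindex : N.relIndex Q ∣ ordProj[p] N.index :=
    Nat.dvd_ordProj_of_dvd_of_dvd_prime_pow hp (Q.card_eq_multiplicity ▸ relIndex_dvd_card _ _)
      (relIndex_dvd_index_of_normal N Q) index_ne_zero_of_finite
  have hc0 : 0 < Nat.card (N.subgroupOf Q) := Nat.card_pos
  have hr0 : 0 < N.relIndex Q := Nat.pos_of_ne_zero index_ne_zero_of_finite
  have h1 := Nat.le_of_dvd (pow_pos hp.pos _) hcard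
  have h2 := Nat.le_of_dvd (pow_pos hp.pos _) hindex
  constructor <;> nlinarith

theorem center_le_subgroupOf_normal [Finite G] (Q : Sylow p G) (hQ : ¬ ∀ a b : Q, a * b = b * a)
    (hG : (Nat.card G).factorization p = 3) (N : Subgroup G) [N.Normal]
    (hN : (Nat.card N).factorization p = 2) : center Q ≤ N.subgroupOf Q := by
  obtain ⟨hcard, hrelIndex⟩ := Q.card_subgroupOf_normal_and_relIndex N
  have hindex : N.index.factorization p = 1 := by
    have := congrArg (·.factorization p) N.card_mul_index
    simp only [Nat.factorization_mul Nat.card_pos.ne' index_ne_zero_of_finite, Finsupp.add_apply,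
      hN, hG] at this
    omega
  have : IsMulCommutative (N.subgroupOf Q) :=
    IsPGroup.isMulCommutative_of_card_eq_prime_sq (by rw [hcard, hN])
  refine center_le_of_index_prime ?_ hQ
  change (N.relIndex Q).Prime
  rw [hrelIndex, hindex, pow_one]
  exact Fact.out

theorem exists_mem_le_centralizer [Finite G] {x : G} (hx : IsPGroup p (zpowers x))
    (hC : (Nat.card (centralizer {x})).factorization p = (Nat.card G).factorization p) :
    ∃ Q : Sylow p G, x ∈ Q ∧ (Q : Subgroup G) ≤ centralizer {x} := by
  set C := centralizer {x}
  obtain ⟨S, hS⟩ := (hx.comap_of_injective C.subtype C.subtype_injective).exists_le_sylow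
  refine ⟨ofCard (S.map C.subtype) ?_,
    ⟨⟨x, mem_centralizer_singleton_iff.mpr rfl⟩, hS (mem_zpowers x), rfl⟩, map_subtype_le _⟩
  rw [card_map_of_injective C.subtype_injective, S.card_eq_multiplicity, hC]

end Sylow

namespace IsPGroup

variable {p : ℕ} [Fact p.Prime]

theorem sq_dvd_card_centralizer {K : Type*} [Group K] {n : ℕ} (hK : Nat.card K = p ^ n)
    (hn : 2 ≤ n) (x : K) : p ^ 2 ∣ Nat.card (centralizer {x}) := by
  have hp : p.Prime := Fact.out
  have : Finite K := Nat.finite_of_card_ne_zero (by simp [hK, hp.ne_zero])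
  by_cases hx : x ∈ center K
  · rw [centralizer_eq_top_iff_subset.mpr (Set.singleton_subset_iff.mpr hx), card_top, hK]
    exact pow_dvd_pow p hn
  obtain ⟨k, hk, hZ⟩ := card_center_eq_prime_pow hK (by omega)
  obtain ⟨j, -, hC⟩ := (Nat.dvd_prime_pow hp).mp (hK ▸ card_subgroup_dvd_card (centralizer {x}))
  have hkj : k ≤ j := (Nat.pow_dvd_pow_iff_le_right hp.one_lt).mp
    (hZ ▸ hC ▸ card_dvd_of_le (center_le_centralizer _))
  have hkj' : k ≠ j := by
    rintro rfl
    refine hx ((eq_of_le_of_card_ge (center_le_centralizer {x}) (by rw [hZ, hC])) ▸ ?_)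
    exact mem_centralizer_singleton_iff.mpr rfl
  rw [hC]
  exact pow_dvd_pow p (by omega)

theorem sq_dvd_card_centralizer_of_mem {G : Type*} [Group G] {H : Subgroup G} {n : ℕ}
    (hH : Nat.card H = p ^ n) (hn : 2 ≤ n) {x : G} (hx : x ∈ H) :
    p ^ 2 ∣ Nat.card (centralizer {x}) := by
  refine (sq_dvd_card_centralizer hH hn ⟨x, hx⟩).trans ?_
  rw [← card_map_of_injective H.subtype_injective]
  refine card_dvd_of_le ((map_centralizer_le_centralizer_image _ _).trans ?_)
  rw [Set.image_singleton]
  rfl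

end IsPGroup

/-- Let `G` be finite with Sylow `p`-subgroup `P` of maximal class with `|P| = p³`
(i.e. `P` is non-abelian of order `p³`), and `N ⊴ G` with `|N|_p = p²`. Then no
`G`-conjugate of any `x ∈ P \ N` lies in `N`, and `|C_G(x)|_p = p²`. -/
theorem stmt9 (p : ℕ) [Fact p.Prime] (G : Type*) [Group G] [Finite G]
    (P : Sylow p G) (hcard : Nat.card P = p ^ 3)
    (hmaxclass : ¬ ∀ a b : P, a * b = b * a)
    (N : Subgroup G) (hN : N.Normal) (hNp : (Nat.card N).factorization p = 2)
    (x : G) (hxP : x ∈ P) (hxN : x ∉ N) :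
    (∀ g : G, g * x * g⁻¹ ∉ N) ∧
      (Nat.card (Subgroup.centralizer {x})).factorization p = 2 := by
  have hp : p.Prime := Fact.out
  have hG : (Nat.card G).factorization p = 3 :=
    Nat.pow_right_injective hp.two_le (P.card_eq_multiplicity.symm.trans hcard)
  refine ⟨fun g hg => hxN (by simpa [mul_assoc] using hN.conj_mem _ hg g⁻¹), ?_⟩
  have hlower : 2 ≤ (Nat.card (centralizer {x})).factorization p :=
    (hp.pow_dvd_iff_le_factorization Nat.card_pos.ne').mp
      (IsPGroup.sq_dvd_card_centralizer_of_mem hcard (by norm_num) hxP)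
  have hupper : (Nat.card (centralizer {x})).factorization p ≤ 3 :=
    hG ▸ (Nat.factorization_le_iff_dvd Nat.card_pos.ne' Nat.card_pos.ne').mpr
      (card_subgroup_dvd_card _) p
  have hne : (Nat.card (centralizer {x})).factorization p ≠ 3 := by
    intro h
    obtain ⟨Q, hxQ, hQC⟩ :=
      Sylow.exists_mem_le_centralizer (P.2.to_le (zpowers_le.mpr hxP)) (h.trans hG.symm)
    have hxZ : (⟨x, hxQ⟩ : Q) ∈ center Q :=
      mem_center_iff.mpr fun z => Subtype.ext (mem_centralizer_singleton_iff.mp (hQC z.2))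
    exact hxN (Q.center_le_subgroupOf_normal (Sylow.not_commutative_of_not_commutative hmaxclass Q)
      hG N hNp hxZ)
  omega
end

section
/- Let P be a minimal non-abelian finite p-group and let x, y ∈ P generate P with [x,y] = z. Then P' = ⟨z⟩ has order p, z is central in P, and every element of P can be written in the form x^i y^j z^k. -/
/-!
Every proper subgroup of a finite `p`-group lies in a normal subgroup `M` of index `p`, and such
an `M` contains all commutators and all `p`-th powers; by minimality `M` is abelian. Applied to
`⟨x⟩` and `⟨y⟩` this shows that `z = ⁅x, y⁆` commutes with `x` and `y`, hence is central, and that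
`x ^ p` commutes with `y`, so `z ^ p = ⁅x ^ p, y⁆ = 1`. Modulo the central subgroup `⟨z⟩` the
generators commute, so `P' = ⟨z⟩`, and the normal form is read off the abelianization.
-/

open Subgroup
open scoped commutatorElement

section Group

variable {G : Type*} [Group G]

theorem mul_comm_of_closure_eq_top {S : Set G} (hS : closure S = ⊤)
    (hcomm : ∀ a ∈ S, ∀ b ∈ S, a * b = b * a) (a b : G) : a * b = b * a := by
  have := isMulCommutative_closure hcomm
  have hmem (g : G) : g ∈ closure S := hS ▸ mem_top g
  exact congrArg Subtype.val (mul_comm' (⟨a, hmem a⟩ : closure S) ⟨b, hmem b⟩)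

theorem zpowers_ne_top_of_not_commutative (hG : ¬ ∀ a b : G, a * b = b * a) (g : G) :
    zpowers g ≠ ⊤ := fun h =>
  hG <| mul_comm_of_closure_eq_top (S := {g}) (by rw [← zpowers_eq_closure, h]) (by simp)

theorem mem_center_of_closure_eq_top {S : Set G} (hS : closure S = ⊤) {z : G}
    (hz : ∀ s ∈ S, s * z = z * s) : z ∈ center G := by
  have hle : closure S ≤ centralizer {z} :=
    (closure_le _).mpr fun s hs => mem_centralizer_iff.mpr fun _ h => h ▸ (hz s hs).symm
  exact mem_center_iff.mpr fun g =>
    (mem_centralizer_iff.mp (hle (hS ▸ mem_top g)) z rfl).symm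

theorem Subgroup.normal_of_le_center {H : Subgroup G} (hH : H ≤ center G) : H.Normal :=
  ⟨fun n hn g => by rwa [mem_center_iff.mp (hH hn) g, mul_inv_cancel_right]⟩

theorem commutator_le_of_closure_eq_top {S : Set G} (hS : closure S = ⊤) {N : Subgroup G}
    [N.Normal] (hN : ∀ a ∈ S, ∀ b ∈ S, ⁅a, b⁆ ∈ N) : _root_.commutator G ≤ N := by
  refine Normal.quotient_commutative_iff_commutator_le.mp ⟨⟨fun a b => ?_⟩⟩
  refine mul_comm_of_closure_eq_top (S := QuotientGroup.mk' N '' S) ?_ ?_ a b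
  · rw [← MonoidHom.map_closure, hS, map_top_of_surjective _ (QuotientGroup.mk'_surjective N)]
  · rintro _ ⟨a, ha, rfl⟩ _ ⟨b, hb, rfl⟩
    rw [← commutatorElement_eq_one_iff_mul_comm, ← map_commutatorElement,
      QuotientGroup.mk'_apply, QuotientGroup.eq_one_iff]
    exact hN a ha b hb

theorem Subgroup.commutator_le_of_index_eq_prime {p : ℕ} [Fact p.Prime] {M : Subgroup G}
    [M.Normal] (hM : M.index = p) : _root_.commutator G ≤ M :=
  have : IsCyclic (G ⧸ M) := isCyclic_of_prime_card (M.index_eq_card ▸ hM)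
  Normal.quotient_commutative_iff_commutator_le.mp inferInstance

theorem commutatorElement_pow_left_of_commute {x y : G} (h : Commute x ⁅x, y⁆) (n : ℕ) :
    ⁅x ^ n, y⁆ = ⁅x, y⁆ ^ n := by
  induction n with
  | zero => simp
  | succ n ih =>
    rw [pow_succ', commutatorElement_mul_left_eq_conj_mul, ih, (h.pow_right n).eq,
      mul_inv_cancel_right, pow_succ]

theorem exists_zpow_mul_zpow_mul_zpow_of_commutator_eq_zpowers {x y z : G}
    (hgen : closure {x, y} = ⊤) (hz : _root_.commutator G = zpowers z) (g : G) :
    ∃ i j k : ℤ, g = x ^ i * y ^ j * z ^ k := by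
  have hab : closure {Abelianization.of x, Abelianization.of y} = ⊤ := by
    rw [← Set.image_pair, ← MonoidHom.map_closure, hgen,
      map_top_of_surjective _ QuotientGroup.mk_surjective]
  obtain ⟨i, j, hij⟩ := mem_closure_pair.mp (hab ▸ mem_top (Abelianization.of g))
  have hker : (x ^ i * y ^ j)⁻¹ * g ∈ zpowers z := by
    rw [← hz, ← Abelianization.ker_of, MonoidHom.mem_ker, map_mul, map_inv,
      map_mul, map_zpow, map_zpow, hij, inv_mul_cancel]
  obtain ⟨k, hk⟩ := mem_zpowers_iff.mp hker
  exact ⟨i, j, k, by rw [hk, mul_inv_cancel_left]⟩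

theorem exists_pow_eq_zpow [Finite G] (g : G) (n : ℤ) : ∃ m : ℕ, g ^ m = g ^ n :=
  mem_powers_iff_mem_zpowers.mpr (zpow_mem_zpowers g n)

end Group

theorem IsPGroup.exists_le_normal_index_eq {p : ℕ} [Fact p.Prime] {G : Type*} [Group G]
    [Finite G] (hG : IsPGroup p G) {H : Subgroup G} (hH : H ≠ ⊤) :
    ∃ M : Subgroup G, H ≤ M ∧ M.Normal ∧ M.index = p := by
  have hp : p.Prime := Fact.out
  obtain ⟨n, hn⟩ := IsPGroup.iff_card.mp hG
  obtain ⟨k, hk⟩ := IsPGroup.iff_card.mp (hG.to_subgroup H)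
  have hkn : k < n := by
    rw [← Nat.pow_lt_pow_iff_right hp.one_lt, ← hk, ← hn]
    exact lt_of_le_of_ne H.card_le_card_group (mt H.card_eq_iff_eq_top.mp hH)
  obtain ⟨M, hM, hHM⟩ := Sylow.exists_subgroup_card_pow_prime_le p (m := n - 1)
    (hn ▸ pow_dvd_pow p (n.sub_le 1)) H hk (by omega)
  have hindex : M.index = p := by
    have := M.card_mul_index
    rw [hM, hn, ← pow_sub_one_mul (by omega : n ≠ 0)] at this
    exact Nat.eq_of_mul_eq_mul_left (pow_pos hp.pos _) this
  refine ⟨M, hHM, normal_of_index_eq_minFac_card ?_, hindex⟩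
  rw [hindex, hn, hp.pow_minFac (by omega)]

theorem IsPGroup.mul_comm_of_zpowers_ne_top {p : ℕ} [Fact p.Prime] {P : Type*} [Group P]
    [Finite P] (hP : IsPGroup p P)
    (hmin : ∀ H : Subgroup P, H ≠ ⊤ → ∀ a ∈ H, ∀ b ∈ H, a * b = b * a) {g : P}
    (hg : zpowers g ≠ ⊤) :
    (∀ h ∈ _root_.commutator P, g * h = h * g) ∧ ∀ h : P, g * h ^ p = h ^ p * g := by
  obtain ⟨M, hgM, _, hM⟩ := hP.exists_le_normal_index_eq hg
  have hMtop : M ≠ ⊤ := mt index_eq_one.mpr (hM ▸ (Fact.out : p.Prime).ne_one)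
  have hgM' : g ∈ M := hgM (mem_zpowers g)
  exact ⟨fun h hh => hmin M hMtop g hgM' h (commutator_le_of_index_eq_prime hM hh),
    fun h => hmin M hMtop g hgM' _ (hM ▸ M.pow_index_mem h)⟩

/-- Let `P` be a minimal non-abelian finite `p`-group generated by `x, y` with `z = [x,y]`.
Then `P' = ⟨z⟩` has order `p`, `z` is central, and every element of `P` has the form
`x^i y^j z^k`. -/
theorem stmt15 (p : ℕ) [Fact p.Prime] (P : Type*) [Group P] [Finite P] (hP : IsPGroup p P)
    (hna : ¬ ∀ a b : P, a * b = b * a)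
    (hmin : ∀ H : Subgroup P, H ≠ ⊤ → ∀ a ∈ H, ∀ b ∈ H, a * b = b * a)
    (x y : P) (hgen : Subgroup.closure {x, y} = ⊤)
    (z : P) (hz : z = x * y * x⁻¹ * y⁻¹) :
    commutator P = Subgroup.zpowers z ∧ Nat.card (commutator P) = p ∧
      z ∈ Subgroup.center P ∧
      ∀ g : P, ∃ i j k : ℕ, g = x ^ i * y ^ j * z ^ k := by
  have hxy : ⁅x, y⁆ = z := by rw [commutatorElement_def, hz]
  have hzP : z ∈ commutator P := hxy ▸ commutator_mem_commutator (mem_top x) (mem_top y)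
  obtain ⟨hxz, -⟩ := hP.mul_comm_of_zpowers_ne_top hmin (zpowers_ne_top_of_not_commutative hna x)
  obtain ⟨hyz, hyxp⟩ :=
    hP.mul_comm_of_zpowers_ne_top hmin (zpowers_ne_top_of_not_commutative hna y)
  have hzc : z ∈ center P :=
    mem_center_of_closure_eq_top hgen (by simp [hxz z hzP, hyz z hzP])
  have hz1 : z ≠ 1 := fun h => hna <| mul_comm_of_closure_eq_top hgen <| by
    have := commutatorElement_eq_one_iff_mul_comm.mp (hxy.trans h)
    simp [this]
  have hzp : z ^ p = 1 := by
    rw [← hxy, ← commutatorElement_pow_left_of_commute (hxy ▸ hxz z hzP),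
      commutatorElement_eq_one_iff_mul_comm, hyxp x]
  have : (zpowers z).Normal := normal_of_le_center (zpowers_le.mpr hzc)
  have hcz : commutator P = zpowers z := by
    refine le_antisymm (commutator_le_of_closure_eq_top hgen ?_) (zpowers_le.mpr hzP)
    have hyx : ⁅y, x⁆ = z⁻¹ := by rw [← hxy, commutatorElement_inv]
    simp [commutatorElement_self, hxy, hyx, mem_zpowers]
  refine ⟨hcz, by rw [hcz, Nat.card_zpowers, orderOf_eq_prime hzp hz1], hzc, fun g => ?_⟩
  obtain ⟨i, j, k, rfl⟩ := exists_zpow_mul_zpow_mul_zpow_of_commutator_eq_zpowers hgen hcz g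
  obtain ⟨a, ha⟩ := exists_pow_eq_zpow x i
  obtain ⟨b, hb⟩ := exists_pow_eq_zpow y j
  obtain ⟨c, hc⟩ := exists_pow_eq_zpow z k
  exact ⟨a, b, c, by rw [ha, hb, hc]⟩
end

section
/- Let G be a finite group with Sylow p-subgroup P, and let N = O_p(G) be such that P/N is cyclic, generated by xN. Then the subgroup C_P(x) = C_N(x)⟨x⟩ is a Sylow p-subgroup of C_G(x). -/
/-- Let `G` be a finite group, `N = O_p(G)` its largest normal `p`-subgroup, and `P` a Sylow
`p`-subgroup with `P = N⟨x⟩`. Then `C_P(x) = C_N(x)⟨x⟩` and `C_P(x)` is a Sylow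
`p`-subgroup of `C_G(x)`. -/
theorem stmt17 (p : ℕ) [Fact p.Prime] (G : Type*) [Group G] [Finite G]
    (N : Subgroup G) (hNn : N.Normal) (hNp : IsPGroup p N)
    (hNmax : ∀ K : Subgroup G, K.Normal → IsPGroup p K → K ≤ N)
    (P : Sylow p G) (x : G) (hxP : x ∈ P)
    (hgen : P.toSubgroup = N ⊔ Subgroup.zpowers x) :
    P.toSubgroup ⊓ Subgroup.centralizer {x} =
        (N ⊓ Subgroup.centralizer {x}) ⊔ Subgroup.zpowers x ∧
      ∃ S : Sylow p (Subgroup.centralizer {x}),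
        S.toSubgroup =
          (P.toSubgroup ⊓ Subgroup.centralizer {x}).subgroupOf (Subgroup.centralizer {x}) := by
  set C := Subgroup.centralizer {x} with hC
  have hxC : x ∈ C := Subgroup.mem_centralizer_iff.mpr (by simp)
  have hzC : Subgroup.zpowers x ≤ C := (Subgroup.zpowers_le).mpr hxC
  have hNP : N ≤ P.toSubgroup := hgen ▸ le_sup_left
  have hzP : Subgroup.zpowers x ≤ P.toSubgroup := hgen ▸ le_sup_right
  -- Part 1
  have h1 : P.toSubgroup ⊓ C = (N ⊓ C) ⊔ Subgroup.zpowers x := by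
    apply le_antisymm
    · rintro g ⟨hgP, hgC⟩
      have : g ∈ ((N ⊔ Subgroup.zpowers x : Subgroup G) : Set G) := hgen ▸ hgP
      rw [sup_comm, Subgroup.mul_normal] at this
      obtain ⟨h, hh, n, hn, rfl⟩ := this
      have hhC : h ∈ C := hzC hh
      have hnC : n ∈ C := by
        have : h⁻¹ * (h * n) ∈ C := mul_mem (inv_mem hhC) hgC
        simpa using this
      exact mul_mem (Subgroup.mem_sup_right hh) (Subgroup.mem_sup_left ⟨hn, hnC⟩)
    · exact sup_le (le_inf (inf_le_left.trans hNP) inf_le_right) (le_inf hzP hzC)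
  refine ⟨h1, ?_⟩
  -- uniqueness: any Sylow containing x equals P
  have huniq : ∀ Q : Sylow p G, x ∈ Q → Q = P := by
    intro Q hxQ
    have hNQ : N ≤ Q.toSubgroup := by
      have hpg : IsPGroup p (N ⊔ Q.toSubgroup : Subgroup G) :=
        IsPGroup.to_sup_of_normal_left hNp Q.isPGroup'
      have := Q.is_maximal' hpg le_sup_right
      rw [← this]; exact le_sup_left
    have hPQ : P.toSubgroup ≤ Q.toSubgroup := by
      rw [hgen]; exact sup_le hNQ ((Subgroup.zpowers_le).mpr hxQ)
    exact Sylow.ext (P.is_maximal' Q.isPGroup' hPQ)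
  -- Part 2
  have hPC : IsPGroup p ((P.toSubgroup ⊓ C).subgroupOf C) :=
    (P.isPGroup'.to_le inf_le_left).of_equiv
      (Subgroup.subgroupOfEquivOfLe (inf_le_right : P.toSubgroup ⊓ C ≤ C)).symm
  obtain ⟨S, hS⟩ := hPC.exists_le_sylow
  refine ⟨S, le_antisymm ?_ hS⟩
  -- S.map C.subtype is a p-subgroup of G containing x
  have hmap : IsPGroup p ((S.toSubgroup.map C.subtype)) := S.isPGroup'.map _
  obtain ⟨Q, hQ⟩ := hmap.exists_le_sylow
  have hxS : x ∈ S.toSubgroup.map C.subtype := by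
    refine ⟨⟨x, hxC⟩, hS ?_, rfl⟩
    exact Subgroup.mem_subgroupOf.mpr ⟨hxP, hxC⟩
  have hQP : Q = P := huniq Q (hQ hxS)
  have hSle : S.toSubgroup.map C.subtype ≤ P.toSubgroup ⊓ C := by
    refine le_inf (hQP ▸ hQ) ?_
    rintro g ⟨⟨g, hg⟩, _, rfl⟩
    exact hg
  intro s hs
  exact Subgroup.mem_subgroupOf.mpr (hSle ⟨s, hs, rfl⟩)
end

section
/- Let P be a finite p-group of maximal class of order pⁿ with n ≥ 4 and p odd. Then the subgroups P₁ = C_P(K₂(P)/K₄(P)) and P₂ = C_P(Z₂(P)) are maximal (index p) characteristic subgroups of P. -/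
/-- `C_P(A/B)`: the subgroup of elements of `P` acting trivially on the section `A/B`,
for `B` a normal subgroup of `P`. -/
def sectionCentralizer {P : Type*} [Group P] (A B : Subgroup P) [B.Normal] : Subgroup P :=
  (Subgroup.centralizer ((A.map (QuotientGroup.mk' B) : Subgroup (P ⧸ B)) : Set (P ⧸ B))).comap
    (QuotientGroup.mk' B)

/-!
Write `K_{i+1} = lowerCentralSeries i` and `Z_i = upperCentralSeries i`, and let `|P| = p^(m+1)`
with class `m`. Both series are strict chains of length `m` from `P` to `1`. Their top factors
`P/K₂` and `P/Z_{m-1}` cannot be cyclic, since a cyclic quotient of `P/N` by a central section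
makes `P/N` abelian. Hence the top factors have order at least `p²`, and counting orders shows
that every other factor has order exactly `p`.

So `K₂/K₄` is generated by one element `s` modulo the central subgroup `K₃/K₄` of order `p`, and
likewise `Z₂` is generated by one element modulo `Z₁`. The centralizer is then the kernel of
`g ↦ ⁅g, s⁆`, a homomorphism into a group of order `p`. It is a proper subgroup because `K₂/K₄`
(resp. `Z₂`) is not central. Both subgroups are characteristic because they are built from
characteristic subgroups.
-/

open QuotientGroup
open scoped commutatorElement

namespace Subgroup

variable {G : Type*} [Group G]

theorem mem_sectionCentralizer_iff {A B : Subgroup G} [B.Normal] {g : G} :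
    g ∈ sectionCentralizer A B ↔ ∀ a ∈ A, ⁅g, a⁆ ∈ B := by
  simp only [sectionCentralizer, mem_comap, mem_centralizer_iff, coe_map, Set.forall_mem_image,
    SetLike.mem_coe]
  refine forall₂_congr fun a _ => ?_
  rw [← eq_one_iff, ← mk'_apply, map_commutatorElement, commutatorElement_eq_one_iff_mul_comm,
    eq_comm]

instance sectionCentralizer_characteristic {A B : Subgroup G} [B.Normal] [A.Characteristic]
    [B.Characteristic] : (sectionCentralizer A B).Characteristic := by
  refine characteristic_iff_le_comap.mpr fun φ g hg => ?_
  rw [mem_comap, mem_sectionCentralizer_iff]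
  intro a ha
  have ha' : φ.symm a ∈ A := by
    rw [← ‹A.Characteristic›.fixed φ]
    simpa using ha
  simpa using (‹B.Characteristic›.fixed φ).ge (mem_sectionCentralizer_iff.mp hg _ ha')

theorem map_mk'_le_center_iff {N H : Subgroup G} [N.Normal] :
    H.map (mk' N) ≤ center (G ⧸ N) ↔ ⁅H, ⊤⁆ ≤ N := by
  rw [map_le_iff_le_comap, ← upperCentralSeriesStep_eq_comap_center, commutator_le]
  simp [SetLike.le_def, mem_upperCentralSeriesStep]

theorem commutator_le_of_isCyclic_quotient {N M : Subgroup G} [N.Normal] [M.Normal]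
    (hNM : N ≤ M) (hM : ⁅M, ⊤⁆ ≤ N) [IsCyclic (G ⧸ M)] : _root_.commutator G ≤ N := by
  have hker : (QuotientGroup.map N M (MonoidHom.id G) (hNM.trans_eq (comap_id M).symm)).ker ≤
      center (G ⧸ N) := by
    rw [QuotientGroup.ker_map, comap_id]
    exact map_mk'_le_center_iff.mpr hM
  have hcomm := MonoidHom.isMulCommutative_of_isCyclic_of_ker_le_center _ hker
  rw [← ker_mk' N, ← map_eq_bot_iff, _root_.commutator_def, map_commutator,
    map_top_of_surjective _ (mk'_surjective N), ← _root_.commutator_def, commutator_eq_bot_iff]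
  exact hcomm

theorem lowerCentralSeries_succ_lt [Group.IsNilpotent G] {i : ℕ}
    (hi : i < Group.nilpotencyClass G) :
    (⊤ : Subgroup G).lowerCentralSeries (i + 1) < (⊤ : Subgroup G).lowerCentralSeries i := by
  refine (lowerCentralSeries_antitone _ i.le_succ).lt_of_ne fun h => hi.not_ge ?_
  have hconst : ∀ j ≥ i,
      (⊤ : Subgroup G).lowerCentralSeries j = (⊤ : Subgroup G).lowerCentralSeries i := by
    refine Nat.le_induction rfl fun j _ ih => ?_
    rw [lowerCentralSeries_succ, ih, ← lowerCentralSeries_succ, h]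
  rw [← lowerCentralSeries_eq_bot_iff_nilpotencyClass_le, ← hconst _ hi.le,
    lowerCentralSeries_nilpotencyClass]

theorem upperCentralSeries_lt_succ {i : ℕ} (hi : i < Group.nilpotencyClass G) :
    upperCentralSeries G i < upperCentralSeries G (i + 1) :=
  upperCentralSeries.StrictMonoOn G (Set.mem_Iic.mpr hi.le) (Set.mem_Iic.mpr hi) i.lt_succ_self

theorem index_lowerCentralSeries_one_ne_prime [Group.IsNilpotent G] {p : ℕ} [Fact p.Prime]
    (hG : 2 ≤ Group.nilpotencyClass G) : ((⊤ : Subgroup G).lowerCentralSeries 1).index ≠ p := by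
  intro h
  have : IsCyclic (G ⧸ (⊤ : Subgroup G).lowerCentralSeries 1) := isCyclic_of_prime_card h
  exact (lowerCentralSeries_succ_lt (i := 1) hG).not_ge
    (commutator_le_of_isCyclic_quotient (lowerCentralSeries_antitone ⊤ (Nat.le_succ 1)) le_rfl)

theorem index_upperCentralSeries_ne_prime [Group.IsNilpotent G] {p k : ℕ} [Fact p.Prime]
    (hk : k + 2 ≤ Group.nilpotencyClass G) : (upperCentralSeries G (k + 1)).index ≠ p := by
  intro h
  have : IsCyclic (G ⧸ upperCentralSeries G (k + 1)) := isCyclic_of_prime_card h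
  have hcomm := commutator_le_of_isCyclic_quotient (upperCentralSeries_mono G k.le_succ)
    (commutator_upperCentralSeries_top_le G k)
  have htop : upperCentralSeries G (k + 1) = ⊤ := eq_top_iff.mpr fun x _ =>
    mem_upperCentralSeries_succ_iff.mpr fun y =>
      hcomm (commutator_mem_commutator (mem_top x) (mem_top y))
  have := upperCentralSeries_eq_top_iff_nilpotencyClass_le.mp htop
  omega

theorem card_mul_relIndex {K L : Subgroup G} (h : K ≤ L) :
    Nat.card K * K.relIndex L = Nat.card L := by
  rw [← relIndex_bot_left, ← relIndex_bot_left, relIndex_mul_relIndex ⊥ K L bot_le h]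

theorem le_zpowers_sup_of_relIndex_prime {S Z : Subgroup G} {s : G} (hZS : Z ≤ S)
    (hp : (Z.relIndex S).Prime) (hs : s ∈ S) (hsZ : s ∉ Z) : S ≤ zpowers s ⊔ Z := by
  rw [← relIndex_mul_relIndex Z (zpowers s ⊔ Z) S le_sup_right
    (sup_le (zpowers_le.mpr hs) hZS)] at hp
  rcases Nat.prime_mul_iff.mp hp with ⟨_, h⟩ | ⟨_, h⟩
  · exact relIndex_eq_one.mp h
  · exact absurd (relIndex_eq_one.mp h (mem_sup_left (mem_zpowers s))) hsZ

theorem centralizer_eq_centralizer_singleton {S Z : Subgroup G} {s : G} (hZ : Z ≤ center G)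
    (hs : s ∈ S) (hS : S ≤ zpowers s ⊔ Z) : centralizer (S : Set G) = centralizer {s} := by
  refine le_antisymm (centralizer_le (Set.singleton_subset_iff.mpr hs)) fun g hg => ?_
  have hSg : S ≤ centralizer {g} := hS.trans <| sup_le
    (zpowers_le.mpr (mem_centralizer_singleton_iff.mpr (mem_centralizer_singleton_iff.mp hg).symm))
    (hZ.trans (center_le_centralizer _))
  exact mem_centralizer_iff.mpr fun h hh => mem_centralizer_singleton_iff.mp (hSg hh)

theorem index_centralizer_singleton_dvd {Z : Subgroup G} {s : G} (hZ : Z ≤ center G)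
    (hsZ : ∀ g, ⁅s, g⁆ ∈ Z) : (centralizer {s}).index ∣ Nat.card Z := by
  have hmem : ∀ g, ⁅g, s⁆ ∈ Z := fun g => commutatorElement_inv s g ▸ inv_mem (hsZ g)
  let f : G →* Z := MonoidHom.mk' (fun g => ⟨⁅g, s⁆, hmem g⟩) fun a b => by
    ext
    show ⁅a * b, s⁆ = ⁅a, s⁆ * ⁅b, s⁆
    have hb := mem_center_iff.mp (hZ (hmem b))
    calc ⁅a * b, s⁆ = a * ⁅b, s⁆ * (s * a⁻¹ * s⁻¹) := by simp only [commutatorElement_def]; group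
      _ = ⁅b, s⁆ * ⁅a, s⁆ := by rw [hb a]; simp only [commutatorElement_def]; group
      _ = ⁅a, s⁆ * ⁅b, s⁆ := (hb _).symm
  have hker : f.ker = centralizer {s} := by
    ext g
    simp [f, mem_centralizer_singleton_iff, commutatorElement_eq_one_iff_mul_comm]
  rw [← hker, index_ker]
  exact card_subgroup_dvd_card f.range

theorem index_centralizer_eq_prime {p : ℕ} (hp : p.Prime) {S Z : Subgroup G} {s : G}
    (hZ : Z ≤ center G) (hZcard : Nat.card Z = p) (hs : s ∈ S) (hS : S ≤ zpowers s ⊔ Z)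
    (hsZ : ∀ g, ⁅s, g⁆ ∈ Z) (hScen : ¬ S ≤ center G) : (centralizer (S : Set G)).index = p := by
  have hcen := centralizer_eq_centralizer_singleton hZ hs hS
  refine (hp.eq_one_or_self_of_dvd _ ?_).resolve_left fun h => hScen ?_
  · exact hcen ▸ hZcard ▸ index_centralizer_singleton_dvd hZ hsZ
  · rwa [index_eq_one, centralizer_eq_top_iff_subset] at h

end Subgroup

namespace IsPGroup

variable {p : ℕ} [Fact p.Prime] {G : Type*} [Group G] [Finite G] (hG : IsPGroup p G)
include hG

theorem exists_relIndex_eq_pow (K L : Subgroup G) : ∃ k, K.relIndex L = p ^ k :=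
  (hG.to_subgroup L).index (K.subgroupOf L)

theorem prime_le_relIndex {K L : Subgroup G} (h : K < L) : p ≤ K.relIndex L := by
  obtain ⟨k, hk⟩ := hG.exists_relIndex_eq_pow K L
  have hk0 : k ≠ 0 := by
    rintro rfl
    exact h.not_ge (Subgroup.relIndex_eq_one.mp (by simpa using hk))
  exact hk ▸ le_self_pow (Fact.out : p.Prime).one_le hk0

/- Each of the `m` steps has index at least `p`, the first one at least `p²`, and together they
account for all of `|G| = p^(m+1)`; so no step can be larger. -/
theorem card_eq_of_chain {m : ℕ} (hcard : Nat.card G = p ^ (m + 1)) {H : ℕ → Subgroup G}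
    (h0 : H 0 = ⊤) (hlt : ∀ i < m, H (i + 1) < H i) (h1 : (H 1).index ≠ p)
    {i : ℕ} (hi : 1 ≤ i) (him : i ≤ m) : Nat.card (H i) = p ^ (m - i) := by
  have hp : p.Prime := Fact.out
  have hstep : ∀ i < m, p * Nat.card (H (i + 1)) ≤ Nat.card (H i) := fun i hi => by
    rw [← Subgroup.card_mul_relIndex (hlt i hi).le, mul_comm]
    exact Nat.mul_le_mul_left _ (hG.prime_le_relIndex (hlt i hi))
  have hlower : ∀ j ≤ m, p ^ j ≤ Nat.card (H (m - j)) := by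
    intro j
    induction j with
    | zero => exact fun _ => Nat.card_pos
    | succ j ih =>
      intro hj
      calc p ^ (j + 1) = p * p ^ j := pow_succ' p j
        _ ≤ p * Nat.card (H (m - j)) := Nat.mul_le_mul_left _ (ih (by omega))
        _ ≤ Nat.card (H (m - (j + 1))) := by
          simpa [show m - (j + 1) + 1 = m - j by omega] using hstep (m - (j + 1)) (by omega)
  have hupper : ∀ i ≥ 1, i ≤ m → p ^ (i + 1) * Nat.card (H i) ≤ p ^ (m + 1) := by
    refine Nat.le_induction (fun _ => ?_) fun i hi ih him => ?_
    · obtain ⟨k, hk⟩ := hG.exists_relIndex_eq_pow (H 1) (H 0)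
      rw [h0, Subgroup.relIndex_top_right] at hk
      have hk0 : k ≠ 0 := by
        rintro rfl
        exact (hlt 0 (by omega)).ne (h0 ▸ Subgroup.index_eq_one.mp hk)
      have hk1 : k ≠ 1 := by
        rintro rfl
        exact h1 (hk.trans (pow_one p))
      rw [← hcard, ← Subgroup.card_mul_index (H 1), mul_comm, hk]
      exact Nat.mul_le_mul_left _ (Nat.pow_le_pow_right hp.pos (by omega))
    · calc p ^ (i + 1 + 1) * Nat.card (H (i + 1))
            = p ^ (i + 1) * (p * Nat.card (H (i + 1))) := by ring
        _ ≤ p ^ (i + 1) * Nat.card (H i) := Nat.mul_le_mul_left _ (hstep i (by omega))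
        _ ≤ p ^ (m + 1) := ih (by omega)
  refine le_antisymm ?_ (by simpa [show m - (m - i) = i by omega] using hlower (m - i) (by omega))
  have hsplit : p ^ (m + 1) = p ^ (i + 1) * p ^ (m - i) := by
    rw [← pow_add]
    congr 1
    omega
  exact Nat.le_of_mul_le_mul_left (hsplit ▸ hupper i hi him) (pow_pos hp.pos _)

theorem relIndex_eq_of_chain {m : ℕ} (hcard : Nat.card G = p ^ (m + 1)) {H : ℕ → Subgroup G}
    (h0 : H 0 = ⊤) (hlt : ∀ i < m, H (i + 1) < H i) (h1 : (H 1).index ≠ p)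
    {i : ℕ} (hi : 1 ≤ i) (him : i < m) : (H (i + 1)).relIndex (H i) = p := by
  have h := Subgroup.card_mul_relIndex (hlt i him).le
  rw [hG.card_eq_of_chain hcard h0 hlt h1 (by omega) him,
    hG.card_eq_of_chain hcard h0 hlt h1 hi him.le, show m - i = m - (i + 1) + 1 by omega,
    pow_succ] at h
  exact Nat.eq_of_mul_eq_mul_left (pow_pos (Fact.out : p.Prime).pos _) h

end IsPGroup

namespace Subgroup

variable {p : ℕ} [Fact p.Prime] {G : Type*} [Group G] [Finite G] [Group.IsNilpotent G]
  (hG : IsPGroup p G) {m : ℕ} (hcard : Nat.card G = p ^ (m + 1))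
  (hclass : Group.nilpotencyClass G = m)
include hG hcard hclass

theorem _root_.IsPGroup.relIndex_lowerCentralSeries_succ {i : ℕ} (hi : 1 ≤ i) (him : i < m) :
    ((⊤ : Subgroup G).lowerCentralSeries (i + 1)).relIndex
      ((⊤ : Subgroup G).lowerCentralSeries i) = p :=
  hG.relIndex_eq_of_chain hcard (H := (⊤ : Subgroup G).lowerCentralSeries) rfl
    (fun i hi => lowerCentralSeries_succ_lt (hclass ▸ hi))
    (index_lowerCentralSeries_one_ne_prime (by omega)) hi him

theorem _root_.IsPGroup.relIndex_upperCentralSeries_succ {j : ℕ} (hj : j + 2 ≤ m) :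
    (upperCentralSeries G j).relIndex (upperCentralSeries G (j + 1)) = p := by
  have h := hG.relIndex_eq_of_chain hcard (H := fun i => upperCentralSeries G (m - i))
    (by simp [← hclass, upperCentralSeries_nilpotencyClass])
    (fun i hi => by
      simpa [show m - (i + 1) + 1 = m - i by omega] using
        upperCentralSeries_lt_succ (i := m - (i + 1)) (by omega))
    (by simpa [show m - 1 = m - 2 + 1 by omega] using
      index_upperCentralSeries_ne_prime (k := m - 2) (by omega))
    (i := m - (j + 1)) (by omega) (by omega)
  simpa [show m - (m - (j + 1) + 1) = j by omega, show m - (m - (j + 1)) = j + 1 by omega] using h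

theorem _root_.IsPGroup.index_sectionCentralizer_lowerCentralSeries (hm : 3 ≤ m) :
    (sectionCentralizer ((⊤ : Subgroup G).lowerCentralSeries 1)
      ((⊤ : Subgroup G).lowerCentralSeries 3)).index = p := by
  have hp : p.Prime := Fact.out
  set π := mk' ((⊤ : Subgroup G).lowerCentralSeries 3)
  obtain ⟨k, hk1, hk2⟩ :=
    SetLike.exists_of_lt (lowerCentralSeries_succ_lt (G := G) (i := 1) (by omega))
  have hK : (⊤ : Subgroup G).lowerCentralSeries 1 ≤
      zpowers k ⊔ (⊤ : Subgroup G).lowerCentralSeries 2 :=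
    le_zpowers_sup_of_relIndex_prime (lowerCentralSeries_antitone _ (Nat.le_succ 1))
      ((hG.relIndex_lowerCentralSeries_succ hcard hclass le_rfl (by omega)).symm ▸ hp) hk1 hk2
  rw [sectionCentralizer, index_comap_of_surjective _ (mk'_surjective _)]
  refine index_centralizer_eq_prime hp (Z := ((⊤ : Subgroup G).lowerCentralSeries 2).map π)
    (s := π k) (map_mk'_le_center_iff.mpr le_rfl) ?_ (mem_map_of_mem π hk1) ?_ ?_ ?_
  · rw [← relIndex_ker, ker_mk']
    exact hG.relIndex_lowerCentralSeries_succ hcard hclass (by omega) (by omega)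
  · exact (map_mono hK).trans_eq (by rw [map_sup, MonoidHom.map_zpowers])
  · refine (mk'_surjective _).forall.mpr fun g => ?_
    rw [← map_commutatorElement]
    exact mem_map_of_mem π (commutator_mem_commutator hk1 (mem_top g))
  · rw [map_mk'_le_center_iff]
    exact (lowerCentralSeries_succ_lt (i := 2) (by omega)).not_ge

theorem _root_.IsPGroup.index_centralizer_upperCentralSeries_two (hm : 3 ≤ m) :
    (centralizer (upperCentralSeries G 2 : Set G)).index = p := by
  have hp : p.Prime := Fact.out
  obtain ⟨z, hz2, hz1⟩ :=
    SetLike.exists_of_lt (upperCentralSeries_lt_succ (G := G) (i := 1) (by omega))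
  refine index_centralizer_eq_prime hp (upperCentralSeries_one G).le ?_ hz2
    (le_zpowers_sup_of_relIndex_prime (upperCentralSeries_mono G (Nat.le_succ 1))
      ((hG.relIndex_upperCentralSeries_succ hcard hclass (j := 1) (by omega)).symm ▸ hp) hz2 hz1)
    (mem_upperCentralSeries_succ_iff.mp hz2) fun h => hz1 ((upperCentralSeries_one G).ge (h hz2))
  rw [← relIndex_bot_left]
  exact hG.relIndex_upperCentralSeries_succ hcard hclass (j := 0) (by omega)

end Subgroup

theorem stmt18_general (p n : ℕ) [Fact p.Prime] (P : Type*) [Group P] [Finite P]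
    (hP : IsPGroup p P) [Group.IsNilpotent P]
    (hcard : Nat.card P = p ^ n) (hclass : Group.nilpotencyClass P = n - 1) (hn : 4 ≤ n) :
    (sectionCentralizer ((⊤ : Subgroup P).lowerCentralSeries 1) ((⊤ : Subgroup P).lowerCentralSeries 3)).index = p ∧
    (sectionCentralizer ((⊤ : Subgroup P).lowerCentralSeries 1) ((⊤ : Subgroup P).lowerCentralSeries 3)).Characteristic ∧
    (Subgroup.centralizer (Subgroup.upperCentralSeries P 2 : Set P)).index = p ∧
    (Subgroup.centralizer (Subgroup.upperCentralSeries P 2 : Set P)).Characteristic := by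
  obtain ⟨m, rfl⟩ : ∃ m, n = m + 1 := ⟨n - 1, by omega⟩
  rw [Nat.add_sub_cancel] at hclass
  exact ⟨hP.index_sectionCentralizer_lowerCentralSeries hcard hclass (by omega), inferInstance,
    hP.index_centralizer_upperCentralSeries_two hcard hclass (by omega), inferInstance⟩

/-- Let `P` be a `p`-group of maximal class of order `pⁿ`, `n ≥ 4`, `p` odd. Then
`P₁ = C_P(K₂(P)/K₄(P))` and `P₂ = C_P(Z₂(P))` are characteristic subgroups of index `p`.
Here `K_{i}(P) = lowerCentralSeries P (i-1)`. -/
theorem stmt18 (p n : ℕ) [Fact p.Prime] (hodd : Odd p) (P : Type*) [Group P] [Finite P]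
    (hP : IsPGroup p P) [Group.IsNilpotent P]
    (hcard : Nat.card P = p ^ n) (hclass : Group.nilpotencyClass P = n - 1) (hn : 4 ≤ n) :
    (sectionCentralizer ((⊤ : Subgroup P).lowerCentralSeries 1) ((⊤ : Subgroup P).lowerCentralSeries 3)).index = p ∧
    (sectionCentralizer ((⊤ : Subgroup P).lowerCentralSeries 1) ((⊤ : Subgroup P).lowerCentralSeries 3)).Characteristic ∧
    (Subgroup.centralizer (Subgroup.upperCentralSeries P 2 : Set P)).index = p ∧
    (Subgroup.centralizer (Subgroup.upperCentralSeries P 2 : Set P)).Characteristic :=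
  stmt18_general p n P hP hcard hclass hn
end
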